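/- Let v be a gross substitute integer-valued valuation on a finite set Ω, p an integer price vector, and S ⊆ Ω a set with u_{v,p}(S) + l = u_{v,p}, i.e., the utility of S falls short of the maximum utility by exactly l ≥ 0. Then there exist sets R, D ⊆ Ω such that |R| ≤ l, D ⊆ S ∪ R, and D ∈ D_v(p). -/
import Mathlib


open Finset

noncomputable section

variable {Ω : Type*}

/-- The utility of a set `S` under valuation `v` and price vector `p`. -/
def util (v : Finset Ω → ℝ) (p : Ω → ℝ) (S : Finset Ω) : ℝ := v S - ∑ j ∈ S, p j

/-- The demand set: all sets maximizing utility. -/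
def Demand (v : Finset Ω → ℝ) (p : Ω → ℝ) : Set (Finset Ω) :=
  {S | ∀ T : Finset Ω, util v p T ≤ util v p S}

/-- The minimal demand sets: demand sets all of whose proper subsets have strictly
smaller utility. -/
def DemandMin (v : Finset Ω → ℝ) (p : Ω → ℝ) : Set (Finset Ω) :=
  {S | S ∈ Demand v p ∧ ∀ T : Finset Ω, T ⊂ S → util v p T < util v p S}

/-- The maximum utility of a player. -/
def maxUtil [Fintype Ω] (v : Finset Ω → ℝ) (p : Ω → ℝ) : ℝ :=
  Finset.univ.sup' Finset.univ_nonempty (util v p)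

/-- A valuation: zero on the empty set and monotone under inclusion. -/
def IsValuation (v : Finset Ω → ℝ) : Prop :=
  v ∅ = 0 ∧ ∀ S T : Finset Ω, S ⊆ T → v S ≤ v T

/-- Gross substitutes: if prices (weakly) increase, there is a demanded set containing
all previously demanded items whose price did not change. -/
def GrossSubstitute (v : Finset Ω → ℝ) : Prop :=
  ∀ p q : Ω → ℝ, (∀ j, 0 ≤ p j) → (∀ j, p j ≤ q j) →
    ∀ S ∈ Demand v p, ∃ S' ∈ Demand v q, ∀ j ∈ S, p j = q j → j ∈ S'

/-- `GGS k M`: the `(k,M)`-truncations of gross substitute valuations. -/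
def GGS (k : ℕ) (M : ℝ) (v : Finset Ω → ℝ) : Prop :=
  ∃ g : Finset Ω → ℝ, IsValuation g ∧ GrossSubstitute g ∧
    (∀ S : Finset Ω, S.card < k → v S = g S ∧ g S ≤ M) ∧
    (∀ S : Finset Ω, k ≤ S.card → v S = M ∧ M ≤ g S)

/-- `f_{v,p}(S) = min_{D ∈ D*_v(p)} |D ∩ S|`. -/
def fMin [DecidableEq Ω] (v : Finset Ω → ℝ) (p : Ω → ℝ) (S : Finset Ω) : ℕ :=
  sInf ((fun D => (D ∩ S).card) '' DemandMin v p)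

/-- `f_p(S) = (Σ_i f_{i,p}(S)) − |S|`. -/
def fTot [DecidableEq Ω] {n : ℕ} (v : Fin n → Finset Ω → ℝ) (p : Ω → ℝ) (S : Finset Ω) : ℤ :=
  (∑ i, (fMin (v i) p S : ℤ)) - S.card

/-- The Lyapunov function `L(p) = Σ_i u_{i,p} + Σ_j p(j)`. -/
def Lyap [Fintype Ω] {n : ℕ} (v : Fin n → Finset Ω → ℝ) (p : Ω → ℝ) : ℝ :=
  (∑ i, maxUtil (v i) p) + ∑ j, p j

/-- An envy-free allocation: pairwise disjoint sets, each demanded by its player. -/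
def EnvyFree {n : ℕ} (v : Fin n → Finset Ω → ℝ) (p : Ω → ℝ) (A : Fin n → Finset Ω) : Prop :=
  (∀ i j, i ≠ j → Disjoint (A i) (A j)) ∧ ∀ i, A i ∈ Demand (v i) p

/-- A Walrasian allocation: envy-free, and every unallocated item has price zero. -/
def Walrasian {n : ℕ} (v : Fin n → Finset Ω → ℝ) (p : Ω → ℝ) (A : Fin n → Finset Ω) : Prop :=
  EnvyFree v p A ∧ ∀ x : Ω, (∀ i, x ∉ A i) → p x = 0

/-- `addInd p S = p + 1_S`: increase the price of every item of `S` by one. -/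
def addInd [DecidableEq Ω] (p : Ω → ℝ) (S : Finset Ω) : Ω → ℝ :=
  fun j => p j + if j ∈ S then 1 else 0

/-- An integer price vector. -/
def IsIntVec (p : Ω → ℝ) : Prop := ∀ j, ∃ z : ℤ, p j = z

/-- An integer-valued valuation. -/
def IsIntVal (v : Finset Ω → ℝ) : Prop := ∀ S : Finset Ω, ∃ z : ℤ, v S = z

/-- A small player: every demanded set is a singleton. -/
def SmallPlayer (v : Finset Ω → ℝ) (p : Ω → ℝ) : Prop :=
  ∀ S ∈ Demand v p, ∃ x, S = {x}

lemma util_le_maxUtil [Fintype Ω] (v : Finset Ω → ℝ) (p : Ω → ℝ) (T : Finset Ω) :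
    util v p T ≤ maxUtil v p :=
  Finset.le_sup' (util v p) (mem_univ T)

lemma exists_maxUtil [Fintype Ω] (v : Finset Ω → ℝ) (p : Ω → ℝ) :
    ∃ D, util v p D = maxUtil v p := by
  obtain ⟨D, -, hD⟩ := Finset.exists_mem_eq_sup' Finset.univ_nonempty (util v p)
  exact ⟨D, hD.symm⟩

lemma mem_demand_of [Fintype Ω] {v : Finset Ω → ℝ} {p : Ω → ℝ} {D : Finset Ω}
    (h : maxUtil v p ≤ util v p D) : D ∈ Demand v p :=
  fun T => (util_le_maxUtil v p T).trans h

lemma maxUtil_eq_of_mem [Fintype Ω] {v : Finset Ω → ℝ} {p : Ω → ℝ} {D : Finset Ω}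
    (h : D ∈ Demand v p) : util v p D = maxUtil v p := by
  obtain ⟨E, hE⟩ := exists_maxUtil v p
  exact le_antisymm (util_le_maxUtil v p D) (hE ▸ h E)

lemma exists_mem_demand [Fintype Ω] (v : Finset Ω → ℝ) (p : Ω → ℝ) :
    ∃ D ∈ Demand v p, util v p D = maxUtil v p := by
  obtain ⟨D, hD⟩ := exists_maxUtil v p
  exact ⟨D, mem_demand_of hD.ge, hD⟩

lemma util_anti [Fintype Ω] {v : Finset Ω → ℝ} {p q : Ω → ℝ} (h : ∀ j, p j ≤ q j)
    (T : Finset Ω) : util v q T ≤ util v p T := by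
  unfold util
  have : ∑ j ∈ T, p j ≤ ∑ j ∈ T, q j := Finset.sum_le_sum fun j _ => h j
  linarith

lemma maxUtil_anti [Fintype Ω] {v : Finset Ω → ℝ} {p q : Ω → ℝ} (h : ∀ j, p j ≤ q j) :
    maxUtil v q ≤ maxUtil v p := by
  obtain ⟨D, -, hD⟩ := exists_mem_demand v q
  exact hD ▸ (util_anti h D).trans (util_le_maxUtil v p D)

lemma sum_int {p : Ω → ℝ} (h : IsIntVec p) (S : Finset Ω) :
    ∃ z : ℤ, ∑ j ∈ S, p j = z := by
  classical
  refine ⟨∑ j ∈ S, Classical.choose (h j), ?_⟩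
  push_cast
  exact Finset.sum_congr rfl fun j _ => Classical.choose_spec (h j)

lemma util_int {v : Finset Ω → ℝ} {p : Ω → ℝ} (hv : IsIntVal v) (hp : IsIntVec p)
    (S : Finset Ω) : ∃ z : ℤ, util v p S = z := by
  obtain ⟨a, ha⟩ := hv S
  obtain ⟨b, hb⟩ := sum_int hp S
  exact ⟨a - b, by rw [util, ha, hb]; push_cast; ring⟩

lemma maxUtil_int [Fintype Ω] {v : Finset Ω → ℝ} {p : Ω → ℝ} (hv : IsIntVal v)
    (hp : IsIntVec p) : ∃ z : ℤ, maxUtil v p = z := by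
  obtain ⟨D, hD⟩ := exists_maxUtil v p
  exact hD ▸ util_int hv hp D

lemma int_add_one_le {x y : ℝ} (hx : ∃ a : ℤ, x = a) (hy : ∃ b : ℤ, y = b)
    (h : x < y) : x + 1 ≤ y := by
  obtain ⟨a, rfl⟩ := hx; obtain ⟨b, rfl⟩ := hy
  exact_mod_cast Int.add_one_le_iff.mpr (by exact_mod_cast h)

lemma addInd_nonneg [DecidableEq Ω] {p : Ω → ℝ} (hp : ∀ j, 0 ≤ p j) (A : Finset Ω) :
    ∀ j, 0 ≤ addInd p A j := by
  intro j; unfold addInd; split <;> linarith [hp j]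

lemma le_addInd [DecidableEq Ω] (p : Ω → ℝ) (A : Finset Ω) : ∀ j, p j ≤ addInd p A j := by
  intro j; unfold addInd; split <;> linarith

lemma addInd_int [DecidableEq Ω] {p : Ω → ℝ} (hp : IsIntVec p) (A : Finset Ω) :
    IsIntVec (addInd p A) := by
  intro j
  obtain ⟨z, hz⟩ := hp j
  unfold addInd
  split
  · exact ⟨z + 1, by rw [hz]; push_cast; ring⟩
  · exact ⟨z, by rw [hz]; ring⟩

lemma util_addInd [DecidableEq Ω] (v : Finset Ω → ℝ) (p : Ω → ℝ) (A S : Finset Ω) :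
    util v (addInd p A) S = util v p S - ((S ∩ A).card : ℝ) := by
  unfold util addInd
  rw [Finset.sum_add_distrib]
  have : ∑ j ∈ S, (if j ∈ A then (1:ℝ) else 0) = ((S ∩ A).card : ℝ) := by
    rw [Finset.sum_ite_mem]
    simp
  rw [this]; ring

lemma chain [Fintype Ω] [DecidableEq Ω] {v : Finset Ω → ℝ} {p : Ω → ℝ}
    (hgs : GrossSubstitute v) (hint : IsIntVal v)
    (hp : ∀ j, 0 ≤ p j) (hpint : IsIntVec p) (A : Finset Ω)
    (hlt : maxUtil v (addInd p A) < maxUtil v p) :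
    ∃ D ∈ Demand v (addInd p A), (D ∩ A).Nonempty := by
  classical
  induction A using Finset.strongInduction with
  | _ A ih =>
    rcases A.eq_empty_or_nonempty with rfl | ⟨x, hx⟩
    · exfalso
      have : addInd p (∅ : Finset Ω) = p := by funext j; simp [addInd]
      rw [this] at hlt; exact lt_irrefl _ hlt
    · set A' := A.erase x with hA'
      have hA'ss : A' ⊂ A := Finset.erase_ssubset hx
      have hA'sub : A' ⊆ A := hA'ss.subset
      have hle' : ∀ j, addInd p A' j ≤ addInd p A j := by
        intro j; unfold addInd
        by_cases h : j ∈ A'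
        · simp [h, hA'sub h]
        · by_cases h2 : j ∈ A <;> simp [h, h2] <;> linarith
      have hstep : addInd p A = addInd (addInd p A') {x} := by
        funext j
        unfold addInd
        by_cases hj : j = x
        · subst hj; simp [hx, hA', Finset.notMem_erase]
        · simp [hj, hA', Finset.mem_erase, hj]
      by_cases h1 : maxUtil v (addInd p A') < maxUtil v p
      · obtain ⟨E, hE, hEA'⟩ := ih A' hA'ss h1
        obtain ⟨D, hD, hDsub⟩ := hgs (addInd p A') (addInd p A)
          (addInd_nonneg hp A') hle' E hE
        obtain ⟨j, hj⟩ := hEA'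
        rw [Finset.mem_inter] at hj
        have hjA : j ∈ A := hA'sub hj.2
        have hpe : addInd p A' j = addInd p A j := by
          unfold addInd; simp [hj.2, hjA]
        exact ⟨D, hD, ⟨j, Finset.mem_inter.mpr ⟨hDsub j hj.1 hpe, hjA⟩⟩⟩
      · have heq : maxUtil v (addInd p A') = maxUtil v p :=
          le_antisymm (maxUtil_anti (le_addInd p A')) (not_lt.mp h1)
        have hdrop : maxUtil v (addInd p A) < maxUtil v (addInd p A') := heq ▸ hlt
        obtain ⟨E, hE, hEmax⟩ := exists_mem_demand v (addInd p A')
        have hutil : util v (addInd p A) E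
            = util v (addInd p A') E - ((E ∩ {x}).card : ℝ) := by
          rw [hstep, util_addInd]
        have hxE : x ∈ E := by
          by_contra hxE
          have : E ∩ {x} = ∅ := Finset.inter_singleton_of_notMem hxE
          rw [this] at hutil
          simp at hutil
          have h2 := util_le_maxUtil v (addInd p A) E
          rw [hutil, hEmax] at h2
          exact absurd hdrop (not_lt.mpr h2)
        have hcard : E ∩ {x} = {x} := Finset.inter_singleton_of_mem hxE
        rw [hcard] at hutil
        simp only [Finset.card_singleton, Nat.cast_one] at hutil
        have hEdem : E ∈ Demand v (addInd p A) := by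
          apply mem_demand_of
          have hint1 := maxUtil_int hint (addInd_int hpint A)
          have hint2 := maxUtil_int hint (addInd_int hpint A')
          have := int_add_one_le hint1 hint2 hdrop
          rw [hutil, hEmax]; linarith
        exact ⟨E, hEdem, ⟨x, Finset.mem_inter.mpr ⟨hxE, hx⟩⟩⟩


/-- Utility Distance: if the utility of `S` falls short of the maximum by
exactly `l`, there are sets `R, D` with `|R| ≤ l`, `D ⊆ S ∪ R` and `D` demanded. -/
theorem gs_utility_distance {Ω : Type*} [Fintype Ω] [DecidableEq Ω]
    (v : Finset Ω → ℝ) (hval : IsValuation v) (hgs : GrossSubstitute v)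
    (hint : IsIntVal v)
    (p : Ω → ℝ) (hp : ∀ j, 0 ≤ p j) (hpint : IsIntVec p)
    (S : Finset Ω) (l : ℕ) (hl : util v p S + l = maxUtil v p) :
    ∃ R D : Finset Ω, R.card ≤ l ∧ D ⊆ S ∪ R ∧ D ∈ Demand v p := by
  classical
  induction l using Nat.strong_induction_on generalizing S with
  | _ l ih =>
    rcases Nat.eq_zero_or_pos l with rfl | hlpos
    · refine ⟨∅, S, le_refl _, by simp, mem_demand_of ?_⟩
      simp at hl; linarith [hl.ge]
    · set q := addInd p Sᶜ with hq
      have hpq : ∀ j, p j ≤ q j := le_addInd p Sᶜ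
      have hq0 : ∀ j, 0 ≤ q j := addInd_nonneg hp Sᶜ
      have hqS : util v q S = util v p S := by
        rw [hq, util_addInd]
        simp
      -- obtain D' ∈ Demand q with strict deficiency bound
      obtain ⟨D', hD', hstrict⟩ :
          ∃ D' ∈ Demand v q, maxUtil v p - util v p D' < (l : ℝ) := by
        by_cases hcase : maxUtil v q < maxUtil v p
        · obtain ⟨D', hD', hne⟩ := chain hgs hint hp hpint Sᶜ hcase
          refine ⟨D', hD', ?_⟩
          have h1 : util v p D' - ((D' ∩ Sᶜ).card : ℝ) = util v q D' := by
            rw [hq, util_addInd]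
          have h2 : util v q S ≤ util v q D' := hD' S
          have h3 : (1 : ℝ) ≤ ((D' ∩ Sᶜ).card : ℝ) := by
            exact_mod_cast Finset.card_pos.mpr hne
          have h4 : maxUtil v p = util v p S + l := hl.symm
          linarith
        · obtain ⟨D', hD', hmax⟩ := exists_mem_demand v q
          refine ⟨D', hD', ?_⟩
          have h1 : util v q D' ≤ util v p D' := util_anti hpq D'
          have h2 : maxUtil v p ≤ maxUtil v q := not_lt.mp hcase
          have h3 : (0 : ℝ) < l := by exact_mod_cast hlpos
          linarith
      -- key inequality
      have hkey : maxUtil v p - util v p D' + ((D' \ S).card : ℝ) ≤ l := by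
        have hsd : D' \ S = D' ∩ Sᶜ := by
          ext a; simp [Finset.mem_sdiff]
        have h1 : util v q D' = util v p D' - ((D' ∩ Sᶜ).card : ℝ) := by
          rw [hq, util_addInd]
        have h2 : util v q S ≤ util v q D' := hD' S
        rw [hsd]; linarith [hl.ge, hl.le, hqS ▸ h2]
      -- deficiency of D' as a natural number
      have hnn : (0 : ℝ) ≤ maxUtil v p - util v p D' :=
        sub_nonneg.mpr (util_le_maxUtil v p D')
      obtain ⟨z, hz⟩ : ∃ z : ℤ, maxUtil v p - util v p D' = z := by
        obtain ⟨a, ha⟩ := maxUtil_int hint hpint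
        obtain ⟨b, hb⟩ := util_int hint hpint D'
        exact ⟨a - b, by rw [ha, hb]; push_cast; ring⟩
      have hz0 : 0 ≤ z := by exact_mod_cast hz ▸ hnn
      set l' := z.toNat with hl'def
      have hl'cast : (l' : ℝ) = maxUtil v p - util v p D' := by
        rw [hz, hl'def]
        exact_mod_cast Int.toNat_of_nonneg hz0
      have hl'lt : l' < l := by
        have : (l' : ℝ) < l := hl'cast ▸ hstrict
        exact_mod_cast this
      obtain ⟨R₁, D, hR₁, hDsub, hDdem⟩ := ih l' hl'lt D' (by linarith [hl'cast.ge])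
      refine ⟨(D' \ S) ∪ R₁, D, ?_, ?_, hDdem⟩
      · have hc : ((D' \ S).card : ℝ) + R₁.card ≤ l := by
          have : (R₁.card : ℝ) ≤ l' := by exact_mod_cast hR₁
          linarith
        calc ((D' \ S) ∪ R₁).card ≤ (D' \ S).card + R₁.card := Finset.card_union_le _ _
          _ ≤ l := by exact_mod_cast hc
      · intro a ha
        rcases Finset.mem_union.mp (hDsub ha) with h | h
        · by_cases haS : a ∈ S
          · exact Finset.mem_union_left _ haS
          · exact Finset.mem_union_right _
              (Finset.mem_union_left _ (Finset.mem_sdiff.mpr ⟨h, haS⟩))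
        · exact Finset.mem_union_right _ (Finset.mem_union_right _ h)
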